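/- arXiv:1205.4490 — 2 statements merged into one kernel-verified Lean document; each statement's English description precedes it below -/
import Mathlib

section
/- Let I = {1,−1}, let Σ = I^ℕ be the full shift, let Ψ: I* → (ℤ,+) be the canonical semigroup homomorphism with Ψ(1) = 1 and Ψ(−1) = −1, and let c: (ℤ,+) → (ℝ⁺,·) be a group homomorphism. Define φ: Σ → ℝ by φ(x) = log c(Ψ(x₁)). Then φ∘π₁ is recurrent and null recurrent with respect to σ⋊Ψ, P(φ∘π₁, σ⋊Ψ) = log 2, P(φ, σ) = log(c(1) + c(−1)), and log 2 ≤ log(c(1)+c(−1)) with equality if and only if c is the trivial homomorphism. -/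
open scoped ENNReal NNReal
open Filter MeasureTheory

namespace CMS

universe u v

variable {A : Type u} {G : Type v}

/-- Admissible sequences for the incidence relation `T`. -/
def Adm (T : A → A → Prop) (x : ℕ → A) : Prop := ∀ n : ℕ, T (x n) (x (n + 1))

/-- The countable Markov shift with alphabet `A` and incidence relation `T`. -/
abbrev MShift (T : A → A → Prop) : Type u := {x : ℕ → A // Adm T x}

noncomputable instance instMSMShift (T : A → A → Prop) : MeasurableSpace (MShift T) :=
  MeasurableSpace.comap (fun x => x.1) (@MeasurableSpace.pi ℕ (fun _ => A) (fun _ => ⊤))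

instance instTopMShift (T : A → A → Prop) : TopologicalSpace (MShift T) :=
  TopologicalSpace.induced (fun x => x.1) (@Pi.topologicalSpace ℕ (fun _ => A) (fun _ => ⊥))

/-- The left shift map. -/
def shift (T : A → A → Prop) : MShift T → MShift T :=
  fun x => ⟨fun n => x.1 (n + 1), fun n => x.2 (n + 1)⟩

/-- Birkhoff (ergodic) sum `S_n f`. -/
noncomputable def birk (T : A → A → Prop) (f : MShift T → ℝ) (n : ℕ) (x : MShift T) : ℝ :=
  ∑ i ∈ Finset.range n, f ((shift T)^[i] x)

/-- `f` is Hölder continuous w.r.t. one of the metrics `d_α`. -/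
def Holder (T : A → A → Prop) (f : MShift T → ℝ) : Prop :=
  ∃ α : ℝ, 0 < α ∧ ∃ C : ℝ, ∀ (n : ℕ) (x y : MShift T),
    (∀ k < n + 1, x.1 k = y.1 k) → |f x - f y| ≤ C * Real.exp (-α * (n + 1 : ℕ))

/-- The cylinder set of a finite word `w`. -/
def cyl (T : A → A → Prop) (w : List A) : Set (MShift T) :=
  {x | ∀ (k : ℕ) (hk : k < w.length), x.1 k = w.get ⟨k, hk⟩}

/-- The partition function `Z_n(f,a,σ)` (summed over periodic points). -/
noncomputable def Zn (T : A → A → Prop) (f : MShift T → ℝ) (a : A) (n : ℕ) : ℝ≥0∞ :=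
  ∑' x : {x : MShift T // x.1 0 = a ∧ (shift T)^[n] x = x},
    ENNReal.ofReal (Real.exp (birk T f n x.1))

/-- The restricted partition function `Z_n^*(f,a,σ)`. -/
noncomputable def Znstar (T : A → A → Prop) (f : MShift T → ℝ) (a : A) (n : ℕ) : ℝ≥0∞ :=
  ∑' x : {x : MShift T // x.1 0 = a ∧ (shift T)^[n] x = x ∧ ∀ k, 0 < k → k < n → x.1 k ≠ a},
    ENNReal.ofReal (Real.exp (birk T f n x.1))

/-- `e^{P(f,σ)}` computed at the letter `a`, i.e. `limsup Z_n(f,a)^{1/n}`. -/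
noncomputable def gLambda (T : A → A → Prop) (f : MShift T → ℝ) (a : A) : ℝ≥0∞ :=
  Filter.limsup (fun n : ℕ => (Zn T f a n) ^ ((n : ℝ)⁻¹)) Filter.atTop

/-- The exponential of the Gurevič pressure (supremum over letters, which for an
irreducible shift agrees with the common value at every letter, and for a reducible
shift with the supremum over irreducible components). -/
noncomputable def expPressure (T : A → A → Prop) (f : MShift T → ℝ) : ℝ≥0∞ :=
  ⨆ a : A, gLambda T f a

/-- The Gurevič pressure `P(f,σ)`, as an extended real number. -/
noncomputable def pressure (T : A → A → Prop) (f : MShift T → ℝ) : EReal :=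
  ENNReal.log (expPressure T f)

/-- `f` is recurrent: `∑_n e^{-nP} Z_n(f,a,σ) = ∞` for some (hence all) `a`. -/
def Recurrent (T : A → A → Prop) (f : MShift T → ℝ) : Prop :=
  ∃ a : A, ∑' n : ℕ, (expPressure T f)⁻¹ ^ (n + 1) * Zn T f a (n + 1) = ∞

/-- `f` is transient if it is not recurrent. -/
def Transient (T : A → A → Prop) (f : MShift T → ℝ) : Prop := ¬ Recurrent T f

/-- `f` is positive recurrent: recurrent and `∑_n n e^{-nP} Z_n^*(f,a,σ) < ∞`. -/
def PosRecurrent (T : A → A → Prop) (f : MShift T → ℝ) : Prop :=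
  Recurrent T f ∧ ∃ a : A,
    ∑' n : ℕ, (n + 1 : ℝ≥0∞) * (expPressure T f)⁻¹ ^ (n + 1) * Znstar T f a (n + 1) < ∞

/-- `f` is null recurrent: recurrent and `∑_n n e^{-nP} Z_n^*(f,a,σ) = ∞`. -/
def NullRecurrent (T : A → A → Prop) (f : MShift T → ℝ) : Prop :=
  Recurrent T f ∧ ∃ a : A,
    ∑' n : ℕ, (n + 1 : ℝ≥0∞) * (expPressure T f)⁻¹ ^ (n + 1) * Znstar T f a (n + 1) = ∞

/-- The Markov shift is irreducible. -/
def Irreducible (T : A → A → Prop) : Prop :=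
  ∀ i j : A, ∃ w : List A, List.Chain' T (i :: (w ++ [j]))

/-- The Markov shift is topologically mixing. -/
def TopMixing (T : A → A → Prop) : Prop :=
  ∀ i j : A, ∃ n₀ : ℕ, ∀ n, n₀ ≤ n → ∃ w : List A, w.length = n ∧ List.Chain' T (i :: (w ++ [j]))

/-- The Markov shift is finitely primitive. -/
def FinPrim (T : A → A → Prop) : Prop :=
  ∃ (l : ℕ) (Λ : Finset (List A)), (∀ w ∈ Λ, w.length = l ∧ List.Chain' T w) ∧
    ∀ i j : A, ∃ w ∈ Λ, List.Chain' T (i :: (w ++ [j]))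

/-- Lengths of admissible loops. -/
def Loops (T : A → A → Prop) : Set ℕ := {n | 0 < n ∧ ∃ x : MShift T, (shift T)^[n] x = x}

/-- `p` is the period (the gcd of the lengths of admissible loops). -/
def IsPeriodOf (T : A → A → Prop) (p : ℕ) : Prop :=
  (∀ n ∈ Loops T, p ∣ n) ∧ ∀ q : ℕ, (∀ n ∈ Loops T, q ∣ n) → q ∣ p

section Ext

variable [Group G]

/-- The incidence relation of the group-extended Markov system `σ ⋊ Ψ` on the alphabet
`A × G`: this realizes the skew product `(ω,g) ↦ (σω, g·Ψ(ω₁))` as a Markov shift. -/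
def extT (T : A → A → Prop) (Ψ : A → G) : A × G → A × G → Prop :=
  fun q r => T q.1 r.1 ∧ r.2 = q.2 * Ψ q.1

/-- The canonical projection `π₁ : Σ × G → Σ`. -/
def proj (T : A → A → Prop) (Ψ : A → G) : MShift (extT T Ψ) → MShift T :=
  fun x => ⟨fun n => (x.1 n).1, fun n => (x.2 n).1⟩

/-- The lifted potential `φ ∘ π₁`. -/
def liftPot (T : A → A → Prop) (Ψ : A → G) (φ : MShift T → ℝ) : MShift (extT T Ψ) → ℝ :=
  fun x => φ (proj T Ψ x)

/-- The extension of `Ψ` to the free semigroup of words, `Ψ(ω₁ ⋯ ω_n) = Ψ(ω₁) ⋯ Ψ(ω_n)`. -/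
def wordΨ (Ψ : A → G) (w : List A) : G := (w.map Ψ).prod

/-- The point of `Σ × G` over the base point `x` with group coordinate `g` at time `0`. -/
def emb (T : A → A → Prop) (Ψ : A → G) (x : MShift T) (g : G) : MShift (extT T Ψ) :=
  ⟨fun n => (x.1 n, Nat.rec g (fun k gk => gk * Ψ (x.1 k)) n), fun n => ⟨x.2 n, rfl⟩⟩

/-- The product measure `μ × λ` on `Σ × G`, where `λ` is the counting (Haar) measure
on the countable discrete group `G`. -/
noncomputable def prodExt (T : A → A → Prop) (Ψ : A → G) (μ : Measure (MShift T)) :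
    Measure (MShift (extT T Ψ)) :=
  Measure.sum fun g : G => Measure.map (fun x => emb T Ψ x g) μ

/-- `c : G → (ℝ⁺, ·)` is a homomorphism into the multiplicative group of positive reals. -/
def IsPosHom (c : G → ℝ) : Prop := (∀ g, 0 < c g) ∧ ∀ g h : G, c (g * h) = c g * c h

/-- The modified potential `φ_c(x) = φ(x) − log c(Ψ(x₁))`. -/
noncomputable def potC (T : A → A → Prop) (Ψ : A → G) (φ : MShift T → ℝ) (c : G → ℝ) :
    MShift T → ℝ :=
  fun x => φ x - Real.log (c (Ψ (x.1 0)))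

/-- `∑_{k=1}^{n} e^{-kP} ∑_{ω ∈ Σ^k, Ψ(ω) = g} e^{sup S_k φ|[ω]}` (with `ρ = e^P`). -/
noncomputable def wordSum (T : A → A → Prop) (Ψ : A → G) (f : MShift T → ℝ) (ρ : ℝ≥0∞)
    (g : G) (n : ℕ) : ℝ≥0∞ :=
  ∑ k ∈ Finset.Icc 1 n, ρ⁻¹ ^ k *
    ∑' w : {w : List A // w.length = k ∧ w.Chain' T ∧ wordΨ Ψ w = g},
      ⨆ x ∈ cyl T w.1, ENNReal.ofReal (Real.exp (birk T f k x))

/-- `φ` is symmetric on average with respect to `Ψ`. -/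
def SymAvg (T : A → A → Prop) (Ψ : A → G) (φ : MShift T → ℝ) : Prop :=
  (⨆ g : G, Filter.limsup (fun n : ℕ =>
      wordSum T Ψ φ (expPressure (extT T Ψ) (liftPot T Ψ φ)) g n /
      wordSum T Ψ φ (expPressure (extT T Ψ) (liftPot T Ψ φ)) g⁻¹ n) Filter.atTop) < ∞

/-- The left translation action of `G` on `Σ × G`, `(ω,γ) ↦ (ω, gγ)`. -/
def gAct (T : A → A → Prop) (Ψ : A → G) (g : G) (x : MShift (extT T Ψ)) :
    MShift (extT T Ψ) :=
  ⟨fun n => ((x.1 n).1, g * (x.1 n).2), fun n => ⟨(x.2 n).1, by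
    show g * (x.1 (n + 1)).2 = g * (x.1 n).2 * Ψ ((x.1 n).1)
    rw [(x.2 n).2, mul_assoc]⟩⟩

end Ext

section Ops

/-- Prepend the letter `i` to the sequence `x`. -/
def consSeq (T : A → A → Prop) (i : A) (x : MShift T) (h : T i (x.1 0)) : MShift T :=
  ⟨fun n => Nat.rec i (fun k _ => x.1 k) n, fun n => by
    cases n with
    | zero => exact h
    | succ m => exact x.2 m⟩

/-- The Perron–Frobenius operator `L_f u (x) = ∑_{Ty = x} e^{f(y)} u(y)`. -/
noncomputable def PF (T : A → A → Prop) (f u : MShift T → ℝ) (x : MShift T) : ℝ :=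
  ∑' i : {i : A // T i (x.1 0)}, Real.exp (f (consSeq T i.1 x i.2)) * u (consSeq T i.1 x i.2)

/-- The Perron–Frobenius operator on `ℝ≥0∞`-valued functions. -/
noncomputable def PFe (T : A → A → Prop) (f : MShift T → ℝ) (u : MShift T → ℝ≥0∞)
    (x : MShift T) : ℝ≥0∞ :=
  ∑' i : {i : A // T i (x.1 0)},
    ENNReal.ofReal (Real.exp (f (consSeq T i.1 x i.2))) * u (consSeq T i.1 x i.2)

/-- `ν` is fixed by `ρ⁻¹ L_f^*`, i.e. `ν(L_f u) = ρ ν(u)` for all (nonnegative measurable) `u`. -/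
def IsEigenMeasure (T : A → A → Prop) (f : MShift T → ℝ) (ρ : ℝ≥0∞)
    (ν : Measure (MShift T)) : Prop :=
  ∀ u : MShift T → ℝ≥0∞, Measurable u → ∫⁻ x, PFe T f u x ∂ν = ρ * ∫⁻ x, u x ∂ν

/-- `h` is bounded on cylindrical sets. -/
def BddOnCyl (T : A → A → Prop) (h : MShift T → ℝ) : Prop :=
  ∀ w : List A, w ≠ [] → w.Chain' T → ∃ M : ℝ, ∀ x ∈ cyl T w, h x ≤ M

/-- `h` is a positive continuous eigenfunction of `L_f` with eigenvalue `ρ`,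
bounded on cylindrical sets. -/
def IsEigenFun (T : A → A → Prop) (f : MShift T → ℝ) (ρ : ℝ) (h : MShift T → ℝ) : Prop :=
  Continuous h ∧ (∀ x, 0 < h x) ∧ BddOnCyl T h ∧ ∀ x, PF T f h x = ρ * h x

/-- `ν` is positive and finite on cylindrical sets. -/
def PosFinOnCyl (T : A → A → Prop) (ν : Measure (MShift T)) : Prop :=
  ∀ w : List A, w ≠ [] → w.Chain' T → 0 < ν (cyl T w) ∧ ν (cyl T w) < ∞

/-- `μ` is invariant under the shift. -/
def ShiftInvariant (T : A → A → Prop) (μ : Measure (MShift T)) : Prop :=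
  ∀ s : Set (MShift T), MeasurableSet s → μ ((shift T) ⁻¹' s) = μ s

/-- `μ` is the (`σ`-invariant, probability) Gibbs measure of `f`. -/
def IsGibbs (T : A → A → Prop) (f : MShift T → ℝ) (μ : Measure (MShift T)) : Prop :=
  IsProbabilityMeasure μ ∧ ShiftInvariant T μ ∧
  ∃ C : ℝ≥0∞, 0 < C ∧ C < ∞ ∧ ∀ w : List A, w ≠ [] → w.Chain' T → ∀ x ∈ cyl T w,
    C⁻¹ * (ENNReal.ofReal (Real.exp (birk T f w.length x)) * (expPressure T f)⁻¹ ^ w.length)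
      ≤ μ (cyl T w) ∧
    μ (cyl T w)
      ≤ C * (ENNReal.ofReal (Real.exp (birk T f w.length x)) * (expPressure T f)⁻¹ ^ w.length)

/-- A measure is conservative for `S` if every measurable wandering set is null. -/
def Conserv {X : Type*} [MeasurableSpace X] (S : X → X) (μ : Measure X) : Prop :=
  ∀ W : Set X, MeasurableSet W →
    (Pairwise fun m n : ℕ => Disjoint (S^[m] ⁻¹' W) (S^[n] ⁻¹' W)) → μ W = 0

/-- A discrete group is amenable: there is a finitely additive, left-invariant
probability measure on the power set of `G`. -/
def IsAmenable (G : Type v) [Group G] : Prop :=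
  ∃ ν : Set G → ℝ, (∀ s, 0 ≤ ν s) ∧ ν Set.univ = 1 ∧
    (∀ s t : Set G, Disjoint s t → ν (s ∪ t) = ν s + ν t) ∧
    ∀ (g : G) (s : Set G), ν ((fun x => g * x) '' s) = ν s

end Ops

end CMS

/-!
Along a loop of `σ ⋊ Ψ` the letters multiply to `0` in `ℤ`, so `φ ∘ π₁` has Birkhoff sum
`log c(0) = 0` there, and the partition functions of `φ ∘ π₁` simply count loops of the simple
random walk on `ℤ`. There are at most `2ⁿ` of them, and at least `C(2m, m) ≥ 4ᵐ / (2m + 1)` of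
length `2m + 2` (an up-step, a balanced word, a down-step), which gives pressure `log 2` and a
harmonically divergent series `∑ 2⁻ⁿ Zₙ`. First returns of length `2m + 2` are bounded below by
the Dyck words of semilength `m`, and `(m + 1) · Catalan(m) = C(2m, m)` makes `∑ n 2⁻ⁿ Zₙ*`
diverge as well. On the base, `Zₙ(φ, a) = c(a) (c(1) + c(-1))ⁿ⁻¹`, and `c(1) c(-1) = 1` gives
`c(1) + c(-1) ≥ 2`, with equality iff `c(1) = 1`.
-/

namespace CMS

open ENNReal Filter Topology

section Shift

variable {A : Type*} {T : A → A → Prop}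

theorem shift_iterate_apply (x : MShift T) (k i : ℕ) :
    ((shift T)^[k] x).1 i = x.1 (i + k) := by
  induction k generalizing x with
  | zero => rfl
  | succ k ih => rw [Function.iterate_succ_apply, ih]; rfl

theorem periodic_of_shift_iterate_eq {x : MShift T} {n : ℕ} (hx : (shift T)^[n] x = x) :
    Function.Periodic x.1 n := fun i => by
  rw [← shift_iterate_apply, hx]

-- The paper's word `x₁ ⋯ x_k`; letters are indexed from `0` here.
def prefixWord (x : MShift T) (k : ℕ) : List A := List.ofFn fun i : Fin k => x.1 i

theorem prefixWord_succ (x : MShift T) (k : ℕ) :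
    prefixWord x (k + 1) = prefixWord x k ++ [x.1 k] := by
  rw [prefixWord, List.ofFn_succ']
  simp [prefixWord]

theorem exp_birk_firstLetter (f : A → ℝ) (x : MShift T) (n : ℕ) :
    Real.exp (birk T (fun y => f (y.1 0)) n x) = ((prefixWord x n).map (Real.exp ∘ f)).prod := by
  induction n with
  | zero => simp [birk, prefixWord]
  | succ n ih =>
    simp only [birk, Finset.sum_range_succ, Real.exp_add] at ih ⊢
    rw [ih, prefixWord_succ, shift_iterate_apply, zero_add]
    simp

theorem birk_zero (x : MShift T) (n : ℕ) : birk T 0 n x = 0 := by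
  simp [birk]

end Shift

section FullShift

variable {A : Type*}

def periodicPt (l : List A) (hl : l ≠ []) : MShift (fun _ _ : A => True) :=
  ⟨fun k => l[k % l.length]'(Nat.mod_lt _ (List.length_pos_iff.2 hl)), fun _ => trivial⟩

theorem periodicPt_apply_of_lt (l : List A) (hl : l ≠ []) {k : ℕ} (hk : k < l.length) :
    (periodicPt l hl).1 k = l[k] := by
  simp [periodicPt, Nat.mod_eq_of_lt hk]

theorem shift_iterate_periodicPt (l : List A) (hl : l ≠ []) :
    (shift _)^[l.length] (periodicPt l hl) = periodicPt l hl := by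
  ext k
  simp [shift_iterate_apply, periodicPt]

theorem prefixWord_periodicPt (l : List A) (hl : l ≠ []) {k : ℕ} (hk : k ≤ l.length) :
    prefixWord (periodicPt l hl) k = l.take k := by
  refine List.ext_getElem (by simp [prefixWord, hk]) fun i hi _ => ?_
  simp only [prefixWord, List.length_ofFn] at hi
  simp [prefixWord, periodicPt_apply_of_lt l hl (lt_of_lt_of_le hi hk)]

theorem periodicPt_prefixWord {x : MShift (fun _ _ : A => True)} {n : ℕ} (hn : 0 < n)
    (hx : (shift _)^[n] x = x) :
    periodicPt (prefixWord x n) (by simp [prefixWord]; omega) = x := by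
  ext k
  simp [periodicPt, prefixWord, (periodic_of_shift_iterate_eq hx).map_mod_nat]

end FullShift

section GroupExtension

variable {A : Type*} {G : Type*} [Group G] {T : A → A → Prop} {Ψ : A → G}

theorem wordΨ_append (l₁ l₂ : List A) : wordΨ Ψ (l₁ ++ l₂) = wordΨ Ψ l₁ * wordΨ Ψ l₂ := by
  simp [wordΨ]

theorem snd_extT_apply (x : MShift (extT T Ψ)) (k : ℕ) :
    (x.1 k).2 = (x.1 0).2 * wordΨ Ψ (prefixWord (proj T Ψ x) k) := by
  induction k with
  | zero => simp [prefixWord, wordΨ]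
  | succ k ih =>
    rw [(x.2 k).2, ih, prefixWord_succ, wordΨ_append, mul_assoc]
    simp [wordΨ, proj]

@[simp]
theorem proj_emb (x : MShift T) (g : G) : proj T Ψ (emb T Ψ x g) = x := rfl

theorem snd_emb_apply (x : MShift T) (g : G) (k : ℕ) :
    ((emb T Ψ x g).1 k).2 = g * wordΨ Ψ (prefixWord x k) :=
  snd_extT_apply _ k

theorem emb_proj (x : MShift (extT T Ψ)) : emb T Ψ (proj T Ψ x) (x.1 0).2 = x := by
  refine Subtype.ext (funext fun k => Prod.ext rfl ?_)
  rw [snd_extT_apply x k, snd_extT_apply (emb T Ψ (proj T Ψ x) (x.1 0).2) k]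
  rfl

theorem proj_shift_iterate (x : MShift (extT T Ψ)) (n : ℕ) :
    proj T Ψ ((shift _)^[n] x) = (shift T)^[n] (proj T Ψ x) :=
  (Function.Semiconj.iterate_right (f := proj T Ψ) (fun _ => rfl) n) x

theorem birk_liftPot (φ : MShift T → ℝ) (n : ℕ) (x : MShift (extT T Ψ)) :
    birk (extT T Ψ) (liftPot T Ψ φ) n x = birk T φ n (proj T Ψ x) := by
  simp only [birk, liftPot, proj_shift_iterate]

theorem shift_iterate_emb (x : MShift T) (g : G) (n : ℕ) :
    (shift _)^[n] (emb T Ψ x g) = emb T Ψ ((shift T)^[n] x) (g * wordΨ Ψ (prefixWord x n)) := by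
  rw [← emb_proj ((shift _)^[n] (emb T Ψ x g)), proj_shift_iterate, shift_iterate_apply,
    zero_add, snd_extT_apply]
  rfl

theorem Zn_extT_le (φ : MShift T → ℝ) (a : A) (g : G) (n : ℕ) :
    Zn (extT T Ψ) (liftPot T Ψ φ) (a, g) n ≤ Zn T φ a n := by
  let F : {x : MShift (extT T Ψ) // x.1 0 = (a, g) ∧ (shift _)^[n] x = x} →
      {x : MShift T // x.1 0 = a ∧ (shift T)^[n] x = x} := fun x =>
    ⟨proj T Ψ x.1, congrArg Prod.fst x.2.1, by rw [← proj_shift_iterate, x.2.2]⟩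
  have hF : Function.Injective F := fun x y h => by
    have h' : proj T Ψ x.1 = proj T Ψ y.1 := congrArg Subtype.val h
    apply Subtype.ext
    rw [← emb_proj x.1, ← emb_proj y.1, h', x.2.1, y.2.1]
  unfold Zn
  simp only [birk_liftPot]
  exact ENNReal.tsum_comp_le_tsum_of_injective hF _

theorem gLambda_extT_le (φ : MShift T → ℝ) (a : A) (g : G) :
    gLambda (extT T Ψ) (liftPot T Ψ φ) (a, g) ≤ gLambda T φ a :=
  Filter.limsup_le_limsup (Filter.Eventually.of_forall fun n =>
    ENNReal.rpow_le_rpow (Zn_extT_le φ a g n) (by positivity))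

theorem expPressure_extT_le (φ : MShift T → ℝ) :
    expPressure (extT T Ψ) (liftPot T Ψ φ) ≤ expPressure T φ :=
  iSup_le fun ⟨a, g⟩ => (gLambda_extT_le φ a g).trans (le_iSup (gLambda T φ) a)

end GroupExtension

namespace IsPosHom

variable {G : Type*} [Group G] {c : G → ℝ}

theorem map_one (hc : IsPosHom c) : c 1 = 1 := by
  have h := hc.2 1 1
  rw [mul_one] at h
  nlinarith [hc.1 1]

def toMonoidHom (hc : IsPosHom c) : G →* ℝ where
  toFun := c
  map_one' := hc.map_one
  map_mul' := hc.2

theorem map_mul_inv (hc : IsPosHom c) (g : G) : c g * c g⁻¹ = 1 := by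
  rw [← hc.2, mul_inv_cancel, hc.map_one]

theorem two_le_add_inv (hc : IsPosHom c) (g : G) : 2 ≤ c g + c g⁻¹ := by
  nlinarith [hc.map_mul_inv g, sq_nonneg (c g - c g⁻¹), hc.1 g, hc.1 g⁻¹]

theorem add_inv_eq_two_iff (hc : IsPosHom c) (g : G) : c g + c g⁻¹ = 2 ↔ c g = 1 := by
  constructor <;> intro h <;> nlinarith [hc.map_mul_inv g, sq_nonneg (c g - 1)]

theorem eq_one_iff_of_int {c : Multiplicative ℤ → ℝ} (hc : IsPosHom c) :
    (∀ g, c g = 1) ↔ c (Multiplicative.ofAdd 1) = 1 := by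
  refine ⟨fun h => h _, fun h g => ?_⟩
  have : hc.toMonoidHom = 1 := MonoidHom.ext_mint (by simpa [toMonoidHom] using h)
  exact DFunLike.congr_fun this g

end IsPosHom

section LogHomPotential

variable {A : Type*} {G : Type*} [Group G] {T : A → A → Prop} {Ψ : A → G} {c : G → ℝ}

noncomputable def logHomPot (T : A → A → Prop) (Ψ : A → G) (c : G → ℝ) : MShift T → ℝ :=
  fun x => Real.log (c (Ψ (x.1 0)))

theorem exp_birk_logHomPot (hc : IsPosHom c) (x : MShift T) (n : ℕ) :
    Real.exp (birk T (logHomPot T Ψ c) n x) = c (wordΨ Ψ (prefixWord x n)) := by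
  unfold logHomPot
  rw [exp_birk_firstLetter (fun b => Real.log (c (Ψ b))), wordΨ]
  change _ = hc.toMonoidHom _
  rw [map_list_prod, List.map_map]
  congr 2
  funext b
  exact Real.exp_log (hc.1 _)

-- The letters along a loop of `σ ⋊ Ψ` multiply to `1` in `G`.
theorem exp_birk_liftPot_logHomPot (hc : IsPosHom c) {x : MShift (extT T Ψ)} {n : ℕ}
    (hx : (shift _)^[n] x = x) :
    Real.exp (birk (extT T Ψ) (liftPot T Ψ (logHomPot T Ψ c)) n x) = 1 := by
  have hloop : (x.1 0).2 * wordΨ Ψ (prefixWord (proj T Ψ x) n) = (x.1 0).2 := by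
    rw [← snd_extT_apply, ← zero_add n, ← shift_iterate_apply, hx]
  rw [birk_liftPot, exp_birk_logHomPot hc, mul_eq_left.1 hloop, hc.map_one]

theorem Zn_liftPot_logHomPot (hc : IsPosHom c) (a : A × G) (n : ℕ) :
    Zn (extT T Ψ) (liftPot T Ψ (logHomPot T Ψ c)) a n = Zn (extT T Ψ) (liftPot T Ψ 0) a n := by
  unfold Zn
  congr 1
  funext x
  rw [exp_birk_liftPot_logHomPot hc x.2.2, birk_liftPot, birk_zero, Real.exp_zero]

theorem Znstar_liftPot_logHomPot (hc : IsPosHom c) (a : A × G) (n : ℕ) :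
    Znstar (extT T Ψ) (liftPot T Ψ (logHomPot T Ψ c)) a n
      = Znstar (extT T Ψ) (liftPot T Ψ 0) a n := by
  unfold Znstar
  congr 1
  funext x
  rw [exp_birk_liftPot_logHomPot hc x.2.2.1, birk_liftPot, birk_zero, Real.exp_zero]

theorem expPressure_liftPot_logHomPot (hc : IsPosHom c) :
    expPressure (extT T Ψ) (liftPot T Ψ (logHomPot T Ψ c))
      = expPressure (extT T Ψ) (liftPot T Ψ 0) := by
  simp only [expPressure, gLambda, Zn_liftPot_logHomPot hc]

theorem recurrent_liftPot_logHomPot_iff (hc : IsPosHom c) :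
    Recurrent (extT T Ψ) (liftPot T Ψ (logHomPot T Ψ c))
      ↔ Recurrent (extT T Ψ) (liftPot T Ψ 0) := by
  simp only [Recurrent, expPressure_liftPot_logHomPot hc, Zn_liftPot_logHomPot hc]

theorem nullRecurrent_liftPot_logHomPot_iff (hc : IsPosHom c) :
    NullRecurrent (extT T Ψ) (liftPot T Ψ (logHomPot T Ψ c))
      ↔ NullRecurrent (extT T Ψ) (liftPot T Ψ 0) := by
  simp only [NullRecurrent, recurrent_liftPot_logHomPot_iff hc, expPressure_liftPot_logHomPot hc,
    Znstar_liftPot_logHomPot hc]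

end LogHomPotential

section RootAsymptotics

theorem tendsto_mul_natCast_rpow_inv {K : ℝ≥0∞} (hK0 : K ≠ 0) (hK : K ≠ ∞) :
    Tendsto (fun n : ℕ => (K * n) ^ (n : ℝ)⁻¹) atTop (𝓝 1) := by
  have hk : 0 < K.toReal := ENNReal.toReal_pos hK0 hK
  have hconst : Tendsto (fun n : ℕ => K.toReal ^ (n : ℝ)⁻¹) atTop (𝓝 1) := by
    simpa using tendsto_const_nhds.rpow
      (tendsto_inv_atTop_zero.comp tendsto_natCast_atTop_atTop) (Or.inl hk.ne')
  have hroot : Tendsto (fun n : ℕ => (n : ℝ) ^ (n : ℝ)⁻¹) atTop (𝓝 1) := by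
    simpa [Function.comp_def, one_div] using tendsto_rpow_div.comp tendsto_natCast_atTop_atTop
  have hreal := ENNReal.tendsto_ofReal (hconst.mul hroot)
  rw [one_mul, ENNReal.ofReal_one] at hreal
  refine hreal.congr fun n => ?_
  rw [← Real.mul_rpow hk.le n.cast_nonneg, ← ENNReal.ofReal_rpow_of_nonneg (by positivity)
    (by positivity), ENNReal.ofReal_mul hk.le, ENNReal.ofReal_toReal hK, ENNReal.ofReal_natCast]

variable {u : ℕ → ℝ≥0∞} {S K : ℝ≥0∞}

theorem limsup_rpow_inv_le (hK0 : K ≠ 0) (hK : K ≠ ∞)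
    (h : ∀ᶠ n in atTop, u n ≤ K * n * S ^ n) :
    limsup (fun n => u n ^ (n : ℝ)⁻¹) atTop ≤ S := by
  calc limsup (fun n => u n ^ (n : ℝ)⁻¹) atTop
      ≤ limsup (fun n : ℕ => (K * n) ^ (n : ℝ)⁻¹ * S) atTop := by
        refine limsup_le_limsup ?_
        filter_upwards [h, eventually_ne_atTop 0] with n hn hn0
        calc u n ^ (n : ℝ)⁻¹ ≤ (K * n * S ^ n) ^ (n : ℝ)⁻¹ := by gcongr
          _ = _ := by
            rw [ENNReal.mul_rpow_of_nonneg _ _ (by positivity), ENNReal.pow_rpow_inv_natCast hn0]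
    _ = S := by
        simpa using (ENNReal.Tendsto.mul_const (tendsto_mul_natCast_rpow_inv hK0 hK)
          (Or.inl one_ne_zero)).limsup_eq

theorem le_limsup_rpow_inv (hK0 : K ≠ 0) (hK : K ≠ ∞)
    (h : ∃ᶠ n in atTop, S ^ n ≤ K * n * u n) :
    S ≤ limsup (fun n => u n ^ (n : ℝ)⁻¹) atTop := by
  have hfreq : ∃ᶠ n : ℕ in atTop, S ≤ (K * n) ^ (n : ℝ)⁻¹ * u n ^ (n : ℝ)⁻¹ := by
    refine (h.and_eventually (eventually_ne_atTop 0)).mono fun n ⟨hn, hn0⟩ => ?_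
    calc S = (S ^ n) ^ (n : ℝ)⁻¹ := (ENNReal.pow_rpow_inv_natCast hn0 S).symm
      _ ≤ (K * n * u n) ^ (n : ℝ)⁻¹ := by gcongr
      _ = _ := ENNReal.mul_rpow_of_nonneg _ _ (by positivity)
  have hv := (tendsto_mul_natCast_rpow_inv hK0 hK).limsup_eq
  calc S ≤ limsup (fun n : ℕ => (K * n) ^ (n : ℝ)⁻¹ * u n ^ (n : ℝ)⁻¹) atTop :=
        le_limsup_of_frequently_le hfreq
    _ ≤ limsup (fun n : ℕ => (K * n) ^ (n : ℝ)⁻¹) atTop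
          * limsup (fun n => u n ^ (n : ℝ)⁻¹) atTop :=
        ENNReal.limsup_mul_le' (by simp [hv]) (by simp [hv])
    _ = limsup (fun n => u n ^ (n : ℝ)⁻¹) atTop := by rw [hv, one_mul]

end RootAsymptotics

section FullShiftPressure

variable {A : Type*}

def loopsEquiv (a : A) (m : ℕ) :
    {x : MShift (fun _ _ : A => True) // x.1 0 = a ∧ (shift _)^[m + 1] x = x} ≃ (Fin m → A) where
  toFun x i := x.1.1 (i + 1)
  invFun w := ⟨periodicPt (a :: List.ofFn w) (List.cons_ne_nil _ _), by simp [periodicPt],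
    by simpa using shift_iterate_periodicPt (a :: List.ofFn w) (List.cons_ne_nil _ _)⟩
  left_inv x := by
    refine Subtype.ext ?_
    convert periodicPt_prefixWord m.succ_pos x.2.2 using 2
    simp [prefixWord, List.ofFn_succ, x.2.1]
  right_inv w := by
    funext i
    simp [periodicPt, Nat.mod_eq_of_lt (Nat.succ_lt_succ i.2)]

theorem Zn_fullShift_firstLetter [Fintype A] (f : A → ℝ) (a : A) (m : ℕ) :
    Zn (fun _ _ : A => True) (fun x => f (x.1 0)) a (m + 1)
      = ENNReal.ofReal (Real.exp (f a)) * (∑ b, ENNReal.ofReal (Real.exp (f b))) ^ m := by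
  unfold Zn
  rw [← (loopsEquiv a m).symm.tsum_eq, tsum_fintype]
  have hterm : ∀ w : Fin m → A, ENNReal.ofReal (Real.exp (birk _ (fun x => f (x.1 0)) (m + 1)
      ((loopsEquiv a m).symm w).1)) = ENNReal.ofReal (Real.exp (f a))
        * ∏ i, ENNReal.ofReal (Real.exp (f (w i))) := by
    intro w
    rw [exp_birk_firstLetter]
    change ENNReal.ofReal ((prefixWord (periodicPt (a :: List.ofFn w) (List.cons_ne_nil _ _))
      (m + 1)).map _).prod = _
    rw [prefixWord_periodicPt _ _ (by simp), List.take_of_length_le (by simp)]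
    simp [List.prod_ofFn, ENNReal.ofReal_mul, ENNReal.ofReal_prod_of_nonneg, Real.exp_nonneg]
  simp only [hterm, ← Finset.mul_sum]
  rw [← Fintype.prod_sum (fun (_ : Fin m) b => ENNReal.ofReal (Real.exp (f b))),
    Finset.prod_const, Finset.card_univ, Fintype.card_fin]

theorem gLambda_fullShift_firstLetter [Fintype A] (f : A → ℝ) (a : A) :
    gLambda (fun _ _ : A => True) (fun x => f (x.1 0)) a
      = ∑ b, ENNReal.ofReal (Real.exp (f b)) := by
  set S := ∑ b, ENNReal.ofReal (Real.exp (f b))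
  set C := ENNReal.ofReal (Real.exp (f a))
  have hC0 : C ≠ 0 := by simp [C, Real.exp_pos]
  have hS0 : S ≠ 0 := by
    simpa [S, Finset.sum_eq_zero_iff] using ⟨a, Real.exp_pos _⟩
  have hS : S ≠ ∞ := ENNReal.sum_ne_top.2 fun _ _ => ENNReal.ofReal_ne_top
  have hCS : ∀ m : ℕ, C * S ^ m = C / S * S ^ (m + 1) := fun m => by
    rw [pow_succ, ← mul_assoc, mul_comm (C / S), mul_assoc, ENNReal.div_mul_cancel hS0 hS,
      mul_comm]
  have hSC : ∀ m : ℕ, S ^ (m + 1) = S / C * (C * S ^ m) := fun m => by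
    rw [← mul_assoc, ENNReal.div_mul_cancel hC0 ENNReal.ofReal_ne_top, pow_succ, mul_comm]
  have hone : ∀ n : ℕ, n ≠ 0 → (1 : ℝ≥0∞) ≤ n := fun n hn => Nat.one_le_cast.2 (by omega)
  refine le_antisymm (limsup_rpow_inv_le (K := C / S) ?_ ?_ ?_)
    (le_limsup_rpow_inv (K := S / C) ?_ ?_ ?_)
  · exact (ENNReal.div_pos hC0 hS).ne'
  · exact ENNReal.div_ne_top ENNReal.ofReal_ne_top hS0
  · filter_upwards [eventually_ne_atTop 0] with n hn
    obtain ⟨m, rfl⟩ := Nat.exists_eq_succ_of_ne_zero hn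
    rw [Zn_fullShift_firstLetter, hCS, mul_right_comm]
    exact le_mul_of_one_le_right' (hone _ hn)
  · exact (ENNReal.div_pos hS0 ENNReal.ofReal_ne_top).ne'
  · exact ENNReal.div_ne_top hS hC0
  · refine Eventually.frequently ?_
    filter_upwards [eventually_ne_atTop 0] with n hn
    obtain ⟨m, rfl⟩ := Nat.exists_eq_succ_of_ne_zero hn
    rw [Zn_fullShift_firstLetter, hSC, mul_right_comm]
    exact le_mul_of_one_le_right' (hone _ hn)

theorem expPressure_fullShift_firstLetter [Fintype A] [Nonempty A] (f : A → ℝ) :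
    expPressure (fun _ _ : A => True) (fun x => f (x.1 0))
      = ∑ b, ENNReal.ofReal (Real.exp (f b)) := by
  simp only [expPressure, gLambda_fullShift_firstLetter, ciSup_const]

end FullShiftPressure

section Walk

def walkStep (b : Bool) : Multiplicative ℤ := Multiplicative.ofAdd (if b then 1 else -1)

def walkHeight (l : List Bool) : ℤ := (l.map fun b => if b then (1 : ℤ) else -1).sum

theorem wordΨ_walkStep (l : List Bool) :
    wordΨ walkStep l = Multiplicative.ofAdd (walkHeight l) := by
  simp only [wordΨ, walkHeight, ofAdd_list_prod, List.map_map, Function.comp_def]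
  rfl

theorem walkHeight_map_dyckStep (l : List DyckStep) :
    walkHeight (l.map fun s => decide (s = DyckStep.U))
      = (l.count DyckStep.U : ℤ) - l.count DyckStep.D := by
  induction l with
  | nil => rfl
  | cons s l ih =>
    rcases s.dichotomy with rfl | rfl <;>
      simp [walkHeight] at ih ⊢ <;> omega

theorem walkHeight_ofFn_mem {N : ℕ} (s : Finset (Fin N)) :
    walkHeight (List.ofFn fun i => decide (i ∈ s)) = 2 * s.card - N := by
  have hs := s.card_le_univ
  rw [Fintype.card_fin] at hs
  simp [walkHeight, List.sum_ofFn, Finset.sum_ite, Finset.filter_notMem_eq_sdiff,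
    Finset.card_sdiff]
  omega

def walkLoop (l : List Bool) : MShift (extT (fun _ _ : Bool => True) walkStep) :=
  emb _ walkStep (periodicPt (true :: l ++ [false]) (List.cons_ne_nil _ _)) 1

theorem walkLoop_apply_zero (l : List Bool) : (walkLoop l).1 0 = (true, 1) := by
  simp [walkLoop, emb, periodicPt]

theorem snd_walkLoop_apply {l : List Bool} {k : ℕ} (hk : k ≤ l.length + 2) :
    ((walkLoop l).1 k).2 = Multiplicative.ofAdd (walkHeight ((true :: l ++ [false]).take k)) := by
  rw [walkLoop, snd_emb_apply, one_mul, ← wordΨ_walkStep]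
  congr 1
  exact prefixWord_periodicPt _ _ (by simpa using hk)

theorem shift_iterate_walkLoop {l : List Bool} (hl : walkHeight l = 0) :
    (shift _)^[l.length + 2] (walkLoop l) = walkLoop l := by
  have hlen : (true :: l ++ [false]).length = l.length + 2 := by simp
  rw [walkLoop, shift_iterate_emb, prefixWord_periodicPt _ _ hlen.ge,
    List.take_of_length_le hlen.le, wordΨ_walkStep, ← hlen, shift_iterate_periodicPt]
  have h0 : walkHeight (true :: l ++ [false]) = 0 := by
    simp only [walkHeight, List.map_cons, List.map_append, List.sum_cons, List.sum_append] at hl ⊢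
    simp [hl]
  rw [h0, ofAdd_zero, one_mul]

theorem eq_of_walkLoop_eq {l₁ l₂ : List Bool} (hlen : l₁.length = l₂.length)
    (h : walkLoop l₁ = walkLoop l₂) : l₁ = l₂ := by
  have h' := congrArg (fun x => prefixWord (proj _ walkStep x) (l₁.length + 2)) h
  simp only [walkLoop, proj_emb] at h'
  rw [prefixWord_periodicPt _ _ (by simp), prefixWord_periodicPt _ _ (by simp [hlen]),
    List.take_of_length_le (by simp), List.take_of_length_le (by simp [hlen])] at h'
  simpa using h'

theorem walkLoop_apply_ne {l : List Bool} (hl : ∀ j, 0 ≤ walkHeight (l.take j)) {k : ℕ}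
    (hk0 : 0 < k) (hk : k < l.length + 2) : (walkLoop l).1 k ≠ (true, 1) := by
  intro h
  have h2 := congrArg Prod.snd h
  rw [snd_walkLoop_apply hk.le] at h2
  obtain ⟨j, rfl⟩ := Nat.exists_eq_succ_of_ne_zero hk0.ne'
  rw [List.cons_append, List.take_succ_cons, List.take_append_of_le_length (by omega),
    ← ofAdd_zero] at h2
  have h3 := Multiplicative.ofAdd.injective h2
  have := hl j
  simp only [walkHeight, List.map_cons, List.sum_cons, if_true] at h3 this
  omega

theorem card_le_tsum_of_injective {ι α : Type*} [Fintype ι] {F : ι → α}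
    (hF : Function.Injective F) (w : α → ℝ≥0∞) (hw : ∀ i, w (F i) = 1) :
    (Fintype.card ι : ℝ≥0∞) ≤ ∑' a, w a := by
  calc (Fintype.card ι : ℝ≥0∞) = ∑' i, w (F i) := by simp [hw]
    _ ≤ ∑' a, w a := ENNReal.tsum_comp_le_tsum_of_injective hF w

theorem card_le_Zn_walk {ι : Type*} [Fintype ι] {N : ℕ} {F : ι → List Bool}
    (hF : Function.Injective F) (hlen : ∀ i, (F i).length = N) (hbal : ∀ i, walkHeight (F i) = 0) :
    (Fintype.card ι : ℝ≥0∞)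
      ≤ Zn (extT (fun _ _ : Bool => True) walkStep) (liftPot _ walkStep 0) (true, 1) (N + 2) := by
  refine card_le_tsum_of_injective (F := fun i => ⟨walkLoop (F i), walkLoop_apply_zero _,
    by rw [← hlen i]; exact shift_iterate_walkLoop (hbal i)⟩) (fun i j h => ?_) _
    fun _ => by simp [birk_liftPot, birk_zero]
  exact hF (eq_of_walkLoop_eq ((hlen i).trans (hlen j).symm) (congrArg Subtype.val h))

theorem card_le_Znstar_walk {ι : Type*} [Fintype ι] {N : ℕ} {F : ι → List Bool}
    (hF : Function.Injective F) (hlen : ∀ i, (F i).length = N) (hbal : ∀ i, walkHeight (F i) = 0)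
    (hpos : ∀ i j, 0 ≤ walkHeight ((F i).take j)) :
    (Fintype.card ι : ℝ≥0∞)
      ≤ Znstar (extT (fun _ _ : Bool => True) walkStep) (liftPot _ walkStep 0) (true, 1)
          (N + 2) := by
  refine card_le_tsum_of_injective (F := fun i => ⟨walkLoop (F i), walkLoop_apply_zero _,
    by rw [← hlen i]; exact shift_iterate_walkLoop (hbal i),
    fun k hk0 hk => walkLoop_apply_ne (hpos i) hk0 (by rw [hlen i]; exact hk)⟩)
    (fun i j h => ?_) _ fun _ => by simp [birk_liftPot, birk_zero]
  exact hF (eq_of_walkLoop_eq ((hlen i).trans (hlen j).symm) (congrArg Subtype.val h))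

end Walk

section WalkCounting

theorem choose_le_Zn_walk (m : ℕ) :
    (((2 * m).choose m : ℕ) : ℝ≥0∞)
      ≤ Zn (extT (fun _ _ : Bool => True) walkStep) (liftPot _ walkStep 0) (true, 1)
          (2 * m + 2) := by
  have hcard := Fintype.card_finset_len (α := Fin (2 * m)) m
  rw [Fintype.card_fin] at hcard
  rw [← hcard]
  refine card_le_Zn_walk (F := fun s => List.ofFn fun i => decide (i ∈ s.1))
    (fun s t h => ?_) (fun _ => List.length_ofFn) fun s => ?_
  · have h' := List.ofFn_injective h
    exact Subtype.ext (Finset.ext fun i => by simpa using congrFun h' i)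
  · rw [walkHeight_ofFn_mem, s.2]
    push_cast
    ring

theorem catalan_le_Znstar_walk (m : ℕ) :
    ((catalan m : ℕ) : ℝ≥0∞)
      ≤ Znstar (extT (fun _ _ : Bool => True) walkStep) (liftPot _ walkStep 0) (true, 1)
          (2 * m + 2) := by
  rw [← DyckWord.card_dyckWord_semilength_eq_catalan]
  have hU : Function.Injective fun s : DyckStep => decide (s = DyckStep.U) := by
    intro s t h
    rcases s.dichotomy with rfl | rfl <;> rcases t.dichotomy with rfl | rfl <;> simp_all
  refine card_le_Znstar_walk (F := fun d => d.1.toList.map fun s => decide (s = DyckStep.U))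
    (fun d e h => Subtype.ext (DyckWord.ext ((List.map_injective_iff.2 hU) h)))
    (fun d => by simp [← d.1.two_mul_semilength_eq_length, d.2])
    (fun d => by simp only [walkHeight_map_dyckStep, d.1.count_U_eq_count_D, sub_self])
    fun d j => ?_
  rw [← List.map_take, walkHeight_map_dyckStep, sub_nonneg]
  exact_mod_cast d.1.count_D_le_count_U j

end WalkCounting

section Divergence

theorem tsum_inv_natCast_add_one_eq_top : ∑' m : ℕ, ((m : ℝ≥0∞) + 1)⁻¹ = ∞ := by
  have h : ¬ Summable fun m : ℕ => ((m : ℝ) + 1)⁻¹ := by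
    have := Real.not_summable_natCast_inv
    rw [← summable_nat_add_iff 1] at this
    simpa using this
  rw [← (ENNReal.tsum_coe_eq_top_iff_not_summable_coe
    (f := fun m : ℕ => ((m : ℝ≥0) + 1)⁻¹)).2 (by simpa using h)]
  congr 1
  funext m
  rw [ENNReal.coe_inv (by positivity)]
  simp

theorem tsum_eq_top_of_inv_le_odd {f : ℕ → ℝ≥0∞} {C : ℝ≥0∞} (hC : C ≠ ∞)
    (h : ∀ m : ℕ, (C * ((m : ℝ≥0∞) + 1))⁻¹ ≤ f (2 * m + 1)) : ∑' n, f n = ∞ := by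
  refine top_le_iff.1 (le_trans ?_ (ENNReal.tsum_comp_le_tsum_of_injective
    (f := fun m => 2 * m + 1) (fun a b hab => by simpa using hab) f))
  calc ∞ = C⁻¹ * ∑' m : ℕ, ((m : ℝ≥0∞) + 1)⁻¹ := by
        rw [tsum_inv_natCast_add_one_eq_top, ENNReal.mul_top (ENNReal.inv_ne_zero.2 hC)]
    _ ≤ ∑' m, f (2 * m + 1) := by
        rw [← ENNReal.tsum_mul_left]
        exact ENNReal.tsum_le_tsum fun m => (ENNReal.mul_inv (Or.inr (by simp))
          (Or.inl hC)).symm.le.trans (h m)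

theorem two_pow_le_mul_choose (m : ℕ) :
    2 ^ (2 * m + 2) ≤ 4 * (2 * m + 2) * (2 * m).choose m := by
  have h4 : 2 ^ (2 * m + 2) = 4 * 4 ^ m := by rw [pow_add, pow_mul]; ring
  rw [h4, mul_assoc]
  exact Nat.mul_le_mul_left 4 ((Nat.four_pow_le_two_mul_add_one_mul_central_binom m).trans
    (Nat.mul_le_mul_right _ (by omega)))

theorem inv_le_two_inv_pow_mul_choose (m : ℕ) :
    (8 * ((m : ℝ≥0∞) + 1))⁻¹ ≤ 2⁻¹ ^ (2 * m + 2) * ((2 * m).choose m : ℕ) := by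
  rw [← ENNReal.inv_pow, ← ENNReal.div_eq_inv_mul,
    ENNReal.le_div_iff_mul_le (Or.inl (by simp)) (Or.inl (by simp)),
    ENNReal.inv_mul_le_iff (by simp) (by simp [ENNReal.mul_eq_top])]
  calc (2 : ℝ≥0∞) ^ (2 * m + 2) ≤ ((4 * (2 * m + 2) * (2 * m).choose m : ℕ) : ℝ≥0∞) := by
        exact_mod_cast two_pow_le_mul_choose m
    _ = _ := by push_cast; ring

end Divergence

section WalkRecurrence

theorem expPressure_walk :
    expPressure (extT (fun _ _ : Bool => True) walkStep) (liftPot _ walkStep 0) = 2 := by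
  refine le_antisymm ((expPressure_extT_le 0).trans_eq ?_) (le_iSup_of_le (true, 1) ?_)
  · refine (expPressure_fullShift_firstLetter (A := Bool) fun _ => 0).trans ?_
    norm_num [one_add_one_eq_two]
  · refine le_limsup_rpow_inv (K := 4) (by norm_num) (by norm_num)
      (frequently_atTop.2 fun N => ⟨2 * N + 2, by omega, ?_⟩)
    calc (2 : ℝ≥0∞) ^ (2 * N + 2) ≤ 4 * ((2 * N + 2 : ℕ) : ℝ≥0∞) * ((2 * N).choose N : ℕ) := by
          exact_mod_cast two_pow_le_mul_choose N
      _ ≤ _ := by gcongr; exact choose_le_Zn_walk N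

theorem recurrent_walk :
    Recurrent (extT (fun _ _ : Bool => True) walkStep) (liftPot _ walkStep 0) := by
  refine ⟨(true, 1), ?_⟩
  rw [expPressure_walk]
  refine tsum_eq_top_of_inv_le_odd (C := 8) (by norm_num) fun m => ?_
  calc (8 * ((m : ℝ≥0∞) + 1))⁻¹ ≤ 2⁻¹ ^ (2 * m + 2) * ((2 * m).choose m : ℕ) :=
        inv_le_two_inv_pow_mul_choose m
    _ ≤ _ := by gcongr; exact choose_le_Zn_walk m

theorem nullRecurrent_walk :
    NullRecurrent (extT (fun _ _ : Bool => True) walkStep) (liftPot _ walkStep 0) := by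
  refine ⟨recurrent_walk, (true, 1), ?_⟩
  rw [expPressure_walk]
  refine tsum_eq_top_of_inv_le_odd (C := 8) (by norm_num) fun m => ?_
  have hcat : (2 * m).choose m ≤ (2 * m + 2) * catalan m := by
    rw [← Nat.centralBinom_eq_two_mul_choose, ← succ_mul_catalan_eq_centralBinom]
    exact Nat.mul_le_mul_right _ (by omega)
  calc (8 * ((m : ℝ≥0∞) + 1))⁻¹ ≤ 2⁻¹ ^ (2 * m + 2) * ((2 * m).choose m : ℕ) :=
        inv_le_two_inv_pow_mul_choose m
    _ ≤ 2⁻¹ ^ (2 * m + 2) * (((2 * m + 2 : ℕ) : ℝ≥0∞) * (catalan m : ℕ)) := by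
        gcongr
        exact_mod_cast hcat
    _ ≤ 2⁻¹ ^ (2 * m + 2) * (((2 * m + 2 : ℕ) : ℝ≥0∞)
          * Znstar (extT _ walkStep) (liftPot _ walkStep 0) (true, 1) (2 * m + 2)) := by
        gcongr
        exact catalan_le_Znstar_walk m
    _ = _ := by push_cast; ring

end WalkRecurrence

section WalkPressure

variable {c : Multiplicative ℤ → ℝ}

theorem pressure_logHomPot_walk (hc : IsPosHom c) :
    pressure (fun _ _ : Bool => True) (logHomPot _ walkStep c)
      = (Real.log (c (walkStep true) + c (walkStep false)) : EReal) := by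
  have hsum := add_pos (hc.1 (walkStep true)) (hc.1 (walkStep false))
  unfold logHomPot
  rw [pressure, expPressure_fullShift_firstLetter fun b => Real.log (c (walkStep b)),
    Fintype.sum_bool, Real.exp_log (hc.1 _), Real.exp_log (hc.1 _),
    ← ENNReal.ofReal_add (hc.1 _).le (hc.1 _).le, ENNReal.log_ofReal_of_pos hsum]

theorem pressure_liftPot_logHomPot_walk (hc : IsPosHom c) :
    pressure (extT (fun _ _ : Bool => True) walkStep)
        (liftPot _ walkStep (logHomPot _ walkStep c))
      = (Real.log 2 : EReal) := by
  rw [pressure, expPressure_liftPot_logHomPot hc, expPressure_walk, ← ENNReal.ofReal_ofNat,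
    ENNReal.log_ofReal_of_pos two_pos]

end WalkPressure

/-- **Example 1.6.** Asymmetric nearest neighbour random walks on `(ℤ,+)`.  For the full
shift on the alphabet `I = {1,-1}`, the canonical homomorphism `Ψ : I^* → ℤ` and a group
homomorphism `c : (ℤ,+) → (ℝ⁺,·)`, the potential `φ(x) = log c(Ψ(x₁))` lifts to a
recurrent (indeed null recurrent) potential `φ∘π₁` with
`P(φ∘π₁,σ⋊Ψ) = log 2 ≤ log(c(1)+c(-1)) = P(φ,σ)`, with equality iff `c = 1`. -/
theorem example_asymmetric_walk_on_Z
    (c : Multiplicative ℤ → ℝ) (hc : IsPosHom c) :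
    let T : Bool → Bool → Prop := fun _ _ => True
    let Ψ : Bool → Multiplicative ℤ :=
      fun b => Multiplicative.ofAdd (if b then (1 : ℤ) else (-1 : ℤ))
    let φ : MShift T → ℝ := fun x => Real.log (c (Ψ (x.1 0)))
    Recurrent (extT T Ψ) (liftPot T Ψ φ) ∧
    NullRecurrent (extT T Ψ) (liftPot T Ψ φ) ∧
    pressure (extT T Ψ) (liftPot T Ψ φ) = ((Real.log 2 : ℝ) : EReal) ∧
    pressure T φ = ((Real.log (c (Ψ true) + c (Ψ false)) : ℝ) : EReal) ∧
    Real.log 2 ≤ Real.log (c (Ψ true) + c (Ψ false)) ∧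
    (Real.log 2 = Real.log (c (Ψ true) + c (Ψ false)) ↔ ∀ g, c g = 1) := by
  intro T Ψ φ
  have hpos : 0 < c (Ψ true) + c (Ψ false) := add_pos (hc.1 _) (hc.1 _)
  -- `Ψ false` is definitionally `(Ψ true)⁻¹`.
  have htwo : 2 ≤ c (Ψ true) + c (Ψ false) := hc.two_le_add_inv (Ψ true)
  refine ⟨(recurrent_liftPot_logHomPot_iff hc).2 recurrent_walk,
    (nullRecurrent_liftPot_logHomPot_iff hc).2 nullRecurrent_walk,
    pressure_liftPot_logHomPot_walk hc, pressure_logHomPot_walk hc,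
    Real.log_le_log two_pos htwo, ?_⟩
  rw [Real.log_injOn_pos.eq_iff (Set.mem_Ioi.2 two_pos) hpos, eq_comm]
  exact (hc.add_inv_eq_two_iff (Ψ true)).trans hc.eq_one_iff_of_int.symm

end CMS
end

section
/- Let t ≥ 2 and let N be a non-trivial normal subgroup of the free group F_t on generators g₁,…,g_t. Then Σ_{n∈ℕ} card{ω ∈ N : |ω| = n} · (2t−1)^{−n/2} = ∞, where |ω| denotes the word length of ω with respect to {g₁, g₁^{−1}, …, g_t, g_t^{−1}}. In particular, γ := limsup_{n→∞} (card{ω ∈ N : |ω| = n})^{1/n} satisfies γ ≥ (2t−1)^{1/2}. -/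
/-!
Conjugate a non-trivial `w ∈ N`, of reduced length `k`, by reduced words `g` of length `j + 1`
ending in a letter that cancels neither end of `w`. Then `g w g⁻¹` is reduced as written, so
these are `(2t-1)^j` distinct elements of `N` of length `2j + k + 2`. Along `n = 2j + k + 2` the
terms of the series therefore stay above the constant `(2t-1)^{-(k+2)/2}`, and the `n`-th roots
of the counts tend to at least `(2t-1)^{1/2}`.
-/

open scoped ENNReal
open Filter Topology

namespace FreeGroup

variable {α : Type*} [DecidableEq α]

theorem IsReduced.invRev {L : List (α × Bool)} (h : IsReduced L) : IsReduced (invRev L) := by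
  rw [← h.reduce_eq, ← toWord_mk, ← toWord_inv]
  exact isReduced_toWord

theorem toWord_mul_mul_inv {w : FreeGroup α} {g : List (α × Bool)} (hw : w ≠ 1)
    (hleft : IsReduced (g ++ w.toWord)) (hright : IsReduced (w.toWord ++ invRev g)) :
    (mk g * w * (mk g)⁻¹).toWord = g ++ w.toWord ++ invRev g := by
  rw [← mk_toWord (x := w), inv_mk, mul_mk, mul_mk, toWord_mk, mk_toWord]
  exact (hleft.append_overlap hright (toWord_eq_nil_iff.not.mpr hw)).reduce_eq

theorem exists_injective_subtype_norm_eq_vector (p : FreeGroup α → Prop) (n : ℕ) :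
    ∃ f : {x : FreeGroup α // p x ∧ norm x = n} → List.Vector (α × Bool) n,
      Function.Injective f :=
  ⟨fun x => ⟨x.1.toWord, x.2.2⟩, fun _ _ h => Subtype.ext (toWord_injective congr($h.1))⟩

variable [Fintype α]

theorem finite_subtype_norm_eq (p : FreeGroup α → Prop) (n : ℕ) :
    Finite {x : FreeGroup α // p x ∧ norm x = n} :=
  have ⟨_, hf⟩ := exists_injective_subtype_norm_eq_vector p n
  Finite.of_injective _ hf

theorem card_subtype_norm_eq_le (p : FreeGroup α → Prop) (n : ℕ) :
    Nat.card {x : FreeGroup α // p x ∧ norm x = n} ≤ (2 * Fintype.card α) ^ n := by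
  obtain ⟨f, hf⟩ := exists_injective_subtype_norm_eq_vector p n
  simpa [Nat.card_eq_fintype_card, card_vector, mul_comm] using Nat.card_le_card_of_injective f hf

theorem exists_letter_forall_isReduced_conj (hα : 2 ≤ Fintype.card α) {w : FreeGroup α}
    (hw : w ≠ 1) : ∃ x : α × Bool, ∀ g : List (α × Bool), IsReduced g → g.getLast? = some x →
      IsReduced (g ++ w.toWord) ∧ IsReduced (w.toWord ++ invRev g) := by
  have hL : w.toWord ≠ [] := toWord_eq_nil_iff.not.mpr hw
  obtain ⟨i, hi⟩ := Fintype.exists_ne_of_one_lt_card (by omega) (w.toWord.head hL).1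
  -- `x` cannot cancel the first letter of `w` (other generator) and `x⁻¹` cannot cancel its
  -- last letter (same exponent sign).
  refine ⟨(i, !(w.toWord.getLast hL).2), fun g hg hgx => ⟨?_, ?_⟩⟩
  · refine List.isChain_append.mpr ⟨hg, isReduced_toWord, fun a ha b hb => ?_⟩
    rw [hgx, Option.mem_some_iff] at ha
    rw [List.head?_eq_some_head hL, Option.mem_some_iff] at hb
    subst ha hb
    exact fun h => absurd h hi
  · refine List.isChain_append.mpr ⟨isReduced_toWord, hg.invRev, fun b hb a ha => ?_⟩
    rw [List.getLast?_eq_some_getLast hL, Option.mem_some_iff] at hb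
    simp [invRev, List.head?_reverse, hgx] at ha
    simp [← hb, ← ha]

theorem card_precedingLetter (v : α × Bool) :
    Fintype.card {y : α × Bool // y.1 = v.1 → y.2 = v.2} = 2 * Fintype.card α - 1 := by
  have : ∀ y : α × Bool, (y.1 = v.1 → y.2 = v.2) ↔ y ≠ (v.1, !v.2) := by
    rintro ⟨a, b⟩; cases b <;> cases v.2 <;> simp
  rw [Fintype.card_congr (Equiv.subtypeEquivRight this), Fintype.card_subtype_compl]
  simp [mul_comm]

noncomputable def precedingLetterEquiv (v : α × Bool) :
    Fin (2 * Fintype.card α - 1) ≃ {y : α × Bool // y.1 = v.1 → y.2 = v.2} :=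
  (Fintype.equivFinOfCardEq (card_precedingLetter v)).symm

noncomputable def reducedWordEndingWith (x : α × Bool) :
    List (Fin (2 * Fintype.card α - 1)) → List (α × Bool)
  | [] => [x]
  | c :: cs => (precedingLetterEquiv ((reducedWordEndingWith x cs).headD x) c).1 ::
      reducedWordEndingWith x cs

section

variable (x : α × Bool)

@[simp]
theorem length_reducedWordEndingWith (cs : List (Fin (2 * Fintype.card α - 1))) :
    (reducedWordEndingWith x cs).length = cs.length + 1 := by
  induction cs with
  | nil => rfl
  | cons c cs ih => simp [reducedWordEndingWith, ih]

theorem reducedWordEndingWith_ne_nil (cs : List (Fin (2 * Fintype.card α - 1))) :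
    reducedWordEndingWith x cs ≠ [] :=
  List.ne_nil_of_length_pos (by simp)

theorem getLast?_reducedWordEndingWith (cs : List (Fin (2 * Fintype.card α - 1))) :
    (reducedWordEndingWith x cs).getLast? = some x := by
  induction cs with
  | nil => rfl
  | cons c cs ih =>
    obtain ⟨d, ds, h⟩ := List.exists_cons_of_ne_nil (reducedWordEndingWith_ne_nil x cs)
    rw [reducedWordEndingWith, h, List.getLast?_cons_cons, ← h, ih]

theorem isReduced_reducedWordEndingWith (cs : List (Fin (2 * Fintype.card α - 1))) :
    IsReduced (reducedWordEndingWith x cs) := by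
  induction cs with
  | nil => exact IsReduced.singleton
  | cons c cs ih =>
    obtain ⟨d, ds, h⟩ := List.exists_cons_of_ne_nil (reducedWordEndingWith_ne_nil x cs)
    rw [reducedWordEndingWith, h, isReduced_cons_cons]
    exact ⟨(precedingLetterEquiv d c).2, h ▸ ih⟩

theorem reducedWordEndingWith_injective : Function.Injective (reducedWordEndingWith x) := by
  intro cs cs' h
  induction cs generalizing cs' with
  | nil => simpa using congr(($h).length)
  | cons c cs ih =>
    cases cs' with
    | nil => simpa using congr(($h).length)
    | cons c' cs' =>
      simp only [reducedWordEndingWith, List.cons.injEq] at h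
      obtain rfl := ih h.2
      rw [(precedingLetterEquiv _).injective (Subtype.ext h.1)]

end

theorem exists_pow_le_card_mem_norm_eq (hα : 2 ≤ Fintype.card α) {N : Subgroup (FreeGroup α)}
    (hN : N.Normal) (hbot : N ≠ ⊥) :
    ∃ m, ∀ j, (2 * Fintype.card α - 1) ^ j ≤
      Nat.card {ω : FreeGroup α // ω ∈ N ∧ norm ω = 2 * j + m} := by
  obtain ⟨w, hwN, hw⟩ := N.bot_or_exists_ne_one.resolve_left hbot
  obtain ⟨x, hx⟩ := exists_letter_forall_isReduced_conj hα hw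
  refine ⟨norm w + 2, fun j => ?_⟩
  have := finite_subtype_norm_eq (· ∈ N) (2 * j + (norm w + 2))
  set g := fun cs : Fin j → Fin (2 * Fintype.card α - 1) => reducedWordEndingWith x (List.ofFn cs)
  have hword cs : (mk (g cs) * w * (mk (g cs))⁻¹).toWord = g cs ++ w.toWord ++ invRev (g cs) :=
    have hconj := hx (g cs) (isReduced_reducedWordEndingWith x _)
      (getLast?_reducedWordEndingWith x _)
    toWord_mul_mul_inv hw hconj.1 hconj.2
  let f : (Fin j → Fin (2 * Fintype.card α - 1)) → {ω // ω ∈ N ∧ norm ω = 2 * j + (norm w + 2)} :=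
    fun cs => ⟨mk (g cs) * w * (mk (g cs))⁻¹, hN.conj_mem _ hwN _, by
      simp only [norm, hword, List.length_append, invRev_length, g, length_reducedWordEndingWith,
        List.length_ofFn]
      ring⟩
  have hf : Function.Injective f := by
    intro cs cs' h
    have h' := congr(toWord ($h).1)
    rw [hword, hword, List.append_assoc, List.append_assoc] at h'
    have hg := (List.append_inj h' (by simp [g])).1
    exact List.ofFn_injective (reducedWordEndingWith_injective x hg)
  simpa [Nat.card_eq_fintype_card] using Nat.card_le_card_of_injective f hf

end FreeGroup

theorem tsum_mul_rpow_neg_half_eq_top_of_pow_le {a : ℕ → ℕ} {q : ℕ} (hq : q ≠ 0) (m : ℕ)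
    (h : ∀ j, q ^ j ≤ a (2 * j + m)) :
    ∑' n : ℕ, (a n : ℝ≥0∞) * (q : ℝ≥0∞) ^ (-(n : ℝ) / 2) = ∞ := by
  have hterm (j : ℕ) : (q : ℝ≥0∞) ^ (-(m : ℝ) / 2) ≤
      (a (2 * j + m) : ℝ≥0∞) * (q : ℝ≥0∞) ^ (-((2 * j + m : ℕ) : ℝ) / 2) :=
    calc (q : ℝ≥0∞) ^ (-(m : ℝ) / 2)
        = (q : ℝ≥0∞) ^ (j : ℝ) * (q : ℝ≥0∞) ^ (-((2 * j + m : ℕ) : ℝ) / 2) := by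
          rw [← ENNReal.rpow_add _ _ (by exact_mod_cast hq) (ENNReal.natCast_ne_top q)]
          push_cast
          ring_nf
      _ ≤ _ := by
          gcongr
          rw [ENNReal.rpow_natCast]
          exact_mod_cast h j
  refine top_unique ?_
  have hpos : (q : ℝ≥0∞) ^ (-(m : ℝ) / 2) ≠ 0 :=
    (ENNReal.rpow_pos (by exact_mod_cast Nat.pos_of_ne_zero hq) (ENNReal.natCast_ne_top q)).ne'
  calc ∞ = ∑' _ : ℕ, (q : ℝ≥0∞) ^ (-(m : ℝ) / 2) :=
        (ENNReal.tsum_const_eq_top_of_ne_zero hpos).symm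
    _ ≤ ∑' j : ℕ, (a (2 * j + m) : ℝ≥0∞) * (q : ℝ≥0∞) ^ (-((2 * j + m : ℕ) : ℝ) / 2) :=
        ENNReal.tsum_le_tsum hterm
    _ ≤ _ := ENNReal.tsum_comp_le_tsum_of_injective (fun _ _ h => by omega)
        (fun n => (a n : ℝ≥0∞) * (q : ℝ≥0∞) ^ (-(n : ℝ) / 2))

theorem isBoundedUnder_rpow_inv_of_le_pow {a : ℕ → ℕ} {C : ℕ} (hC : ∀ n, a n ≤ C ^ n) :
    IsBoundedUnder (· ≤ ·) atTop fun n : ℕ => (a n : ℝ) ^ (n : ℝ)⁻¹ := by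
  refine isBoundedUnder_of_eventually_le (a := (C : ℝ)) ?_
  filter_upwards [eventually_ne_atTop 0] with n hn
  calc (a n : ℝ) ^ (n : ℝ)⁻¹ ≤ ((C : ℝ) ^ n) ^ (n : ℝ)⁻¹ := by gcongr; exact_mod_cast hC n
    _ = C := by
      rw [← Real.rpow_natCast, ← Real.rpow_mul (by positivity), mul_inv_cancel₀ (by simpa),
        Real.rpow_one]

theorem tendsto_rpow_div_two_mul_add_nhds_sqrt {q : ℝ} (hq : q ≠ 0) (m : ℕ) :
    Tendsto (fun j : ℕ => q ^ ((j : ℝ) / (2 * j + m))) atTop (𝓝 (√q)) := by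
  have hexp : Tendsto (fun j : ℕ => (j : ℝ) / (2 * j + m)) atTop (𝓝 2⁻¹) := by
    have := (tendsto_natCast_div_add_atTop ((m : ℝ) / 2)).const_mul 2⁻¹
    rw [mul_one] at this
    refine this.congr fun j => ?_
    field_simp
  rw [Real.sqrt_eq_rpow, one_div]
  exact (Real.continuousAt_const_rpow hq).tendsto.comp hexp

theorem sqrt_le_limsup_rpow_inv_of_pow_le {a : ℕ → ℕ} {q C : ℕ} (hq : q ≠ 0)
    (hC : ∀ n, a n ≤ C ^ n) (m : ℕ) (h : ∀ j, q ^ j ≤ a (2 * j + m)) :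
    √(q : ℝ) ≤ limsup (fun n : ℕ => (a n : ℝ) ^ (n : ℝ)⁻¹) atTop := by
  have hsub (j : ℕ) : (q : ℝ) ^ ((j : ℝ) / (2 * j + m)) ≤
      (a (2 * j + m) : ℝ) ^ ((2 * j + m : ℕ) : ℝ)⁻¹ := by
    rw [div_eq_mul_inv, Real.rpow_mul (by positivity), Real.rpow_natCast]
    push_cast
    gcongr
    exact_mod_cast h j
  refine le_of_forall_lt_imp_le_of_dense fun b hb =>
    le_limsup_of_frequently_le ?_ (isBoundedUnder_rpow_inv_of_le_pow hC)
  have hb' : ∀ᶠ j : ℕ in atTop, b ≤ (q : ℝ) ^ ((j : ℝ) / (2 * j + m)) :=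
    (tendsto_rpow_div_two_mul_add_nhds_sqrt (by exact_mod_cast hq) m).eventually_const_le hb
  have hφ : Tendsto (fun j : ℕ => 2 * j + m) atTop atTop :=
    tendsto_atTop_mono (fun j => show j ≤ 2 * j + m by omega) tendsto_id
  exact hφ.frequently (hb'.mono fun j hj => hj.trans (hsub j)).frequently

/-- **(1.2), Subsection 1.2.**  For a non-trivial normal subgroup `N` of the free group
`F_t` (`t ≥ 2`), the series `∑_n card{ω ∈ N : |ω| = n} (2t-1)^{-n/2}` diverges; in
particular `γ = limsup_n card{ω ∈ N : |ω| = n}^{1/n} ≥ (2t-1)^{1/2}`. -/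
theorem cogrowth_series_diverges
    (t : ℕ) (ht : 2 ≤ t) (N : Subgroup (FreeGroup (Fin t)))
    (hnorm : N.Normal) (hN : N ≠ ⊥) :
    (∑' n : ℕ,
        (Nat.card {ω : FreeGroup (Fin t) // ω ∈ N ∧ FreeGroup.norm ω = n} : ℝ≥0∞) *
          ((2 * t - 1 : ℕ) : ℝ≥0∞) ^ (-(n : ℝ) / 2) = ∞) ∧
    Real.sqrt ((2 * t - 1 : ℕ) : ℝ) ≤
      Filter.limsup (fun n : ℕ =>
        ((Nat.card {ω : FreeGroup (Fin t) // ω ∈ N ∧ FreeGroup.norm ω = n} : ℝ)) ^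
          ((n : ℝ)⁻¹)) Filter.atTop := by
  have hq : 2 * t - 1 ≠ 0 := by omega
  obtain ⟨m, hm⟩ := FreeGroup.exists_pow_le_card_mem_norm_eq (by simpa using ht) hnorm hN
  rw [Fintype.card_fin] at hm
  exact ⟨tsum_mul_rpow_neg_half_eq_top_of_pow_le hq m hm,
    sqrt_le_limsup_rpow_inv_of_pow_le hq (FreeGroup.card_subtype_norm_eq_le (· ∈ N)) m hm⟩
end
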